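/- Let μ > 0, τ > 0, and let τ' ∈ [0, τ), m ∈ ℕ, ρ ≥ 1 and C > 0 be constants. If exp((τ−ε)r^μ) ≤ C r^{m(ρ−1+ε)} exp((τ'+ε)r^μ + r^{ρ−1+ε}) + C r^{m(ρ−1+ε)} exp(r^{μ−ε} + r^{ρ−1+ε}) holds for every sufficiently small ε > 0 and all r in a set of infinite logarithmic measure, then ρ ≥ μ + 1. -/

import Mathlib

open Filter MeasureTheory Real Set

/-- Maximum modulus `M(r,f) = sup_{|z|=r} |f(z)|`. -/
noncomputable def maxMod (f : ℂ → ℂ) (r : ℝ) : ℝ :=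
  sSup ((fun z => ‖f z‖) '' {z : ℂ | ‖z‖ = r})

/-- Order `ρ(f) = limsup_{r→∞} log log M(r,f) / log r`. -/
noncomputable def order (f : ℂ → ℂ) : ℝ :=
  limsup (fun r : ℝ => Real.log (Real.log (maxMod f r)) / Real.log r) atTop

/-- Lower order `μ(f) = liminf_{r→∞} log log M(r,f) / log r`. -/
noncomputable def lowerOrder (f : ℂ → ℂ) : ℝ :=
  liminf (fun r : ℝ => Real.log (Real.log (maxMod f r)) / Real.log r) atTop

/-- Type with respect to a growth exponent `μ`. -/
noncomputable def typeM (f : ℂ → ℂ) (μ : ℝ) : ℝ :=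
  limsup (fun r : ℝ => Real.log (maxMod f r) / r ^ μ) atTop

/-- Lower type with respect to a growth exponent `μ`. -/
noncomputable def lowerTypeM (f : ℂ → ℂ) (μ : ℝ) : ℝ :=
  liminf (fun r : ℝ => Real.log (maxMod f r) / r ^ μ) atTop

/-- `E ⊆ (1,∞)` has infinite logarithmic measure: `∫_E dr/r = ∞`. -/
def InfiniteLogMeasure (E : Set ℝ) : Prop :=
  ∫⁻ r in E, ENNReal.ofReal (1 / r) = ⊤

/-- `E ⊆ (1,∞)` has finite logarithmic measure: `∫_E dr/r < ∞`. -/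
def FiniteLogMeasure (E : Set ℝ) : Prop :=
  ∫⁻ r in E, ENNReal.ofReal (1 / r) < ⊤

private lemma rpow_isLittleO_aux {s t : ℝ} (h : s < t) :
    (fun x : ℝ => x ^ s) =o[atTop] fun x : ℝ => x ^ t := by
  rw [Asymptotics.isLittleO_iff_tendsto']
  · have h0 : (0:ℝ) < t - s := by linarith
    have := tendsto_rpow_neg_atTop h0
    refine this.congr' ?_
    filter_upwards [eventually_gt_atTop (0:ℝ)] with x hx
    rw [← Real.rpow_sub hx]
    ring_nf
  · filter_upwards [eventually_gt_atTop (0:ℝ)] with x hx hxt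
    exact absurd hxt (ne_of_gt (Real.rpow_pos_of_pos hx t))

theorem stmt_18 (μ τ τ' ρ C : ℝ) (m : ℕ)
    (hμ : 0 < μ) (hτ : 0 < τ) (hτ' : 0 ≤ τ') (hττ : τ' < τ)
    (hρ : 1 ≤ ρ) (hC : 0 < C)
    (h : ∀ ε ∈ Set.Ioo (0 : ℝ) ((τ - τ') / 2), ∃ E : Set ℝ, E ⊆ Set.Ioi 1 ∧
      InfiniteLogMeasure E ∧ ∀ r ∈ E,
        Real.exp ((τ - ε) * r ^ μ) ≤
          C * r ^ ((m : ℝ) * (ρ - 1 + ε)) * Real.exp ((τ' + ε) * r ^ μ + r ^ (ρ - 1 + ε))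
          + C * r ^ ((m : ℝ) * (ρ - 1 + ε)) * Real.exp (r ^ (μ - ε) + r ^ (ρ - 1 + ε))) :
    μ + 1 ≤ ρ := by
  by_contra hcon
  push_neg at hcon
  set ε : ℝ := min ((τ - τ') / 4) ((μ + 1 - ρ) / 2) with hεdef
  have hτ'τ4 : 0 < (τ - τ') / 4 := by linarith
  have hμρ2 : 0 < (μ + 1 - ρ) / 2 := by linarith
  have hε0 : 0 < ε := lt_min hτ'τ4 hμρ2
  have hε1 : ε ≤ (τ - τ') / 4 := min_le_left _ _
  have hε2 : ε ≤ (μ + 1 - ρ) / 2 := min_le_right _ _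
  have hεmem : ε ∈ Set.Ioo (0:ℝ) ((τ - τ') / 2) := ⟨hε0, by linarith⟩
  obtain ⟨E, hE1, hEm, hEb⟩ := h ε hεmem
  set a : ℝ := (m : ℝ) * (ρ - 1 + ε) with hadef
  set δ : ℝ := τ - τ' - 2 * ε with hδdef
  have hδ0 : 0 < δ := by simp only [hδdef]; linarith
  have hρεμ : ρ - 1 + ε < μ := by linarith
  -- little-o estimate
  have hlo : (fun r : ℝ => Real.log (2 * C) + a * Real.log r + r ^ (μ - ε) + r ^ (ρ - 1 + ε))
      =o[atTop] (fun r : ℝ => r ^ μ) := by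
    have h1 : (fun _ : ℝ => Real.log (2 * C)) =o[atTop] (fun r : ℝ => r ^ μ) := by
      apply Asymptotics.isLittleO_const_left.2
      right
      exact tendsto_abs_atTop_atTop.comp (tendsto_rpow_atTop hμ)
    have h2 : (fun r : ℝ => a * Real.log r) =o[atTop] (fun r : ℝ => r ^ μ) :=
      (isLittleO_log_rpow_atTop hμ).const_mul_left a
    have h3 : (fun r : ℝ => r ^ (μ - ε)) =o[atTop] (fun r : ℝ => r ^ μ) :=
      rpow_isLittleO_aux (by linarith)
    have h4 : (fun r : ℝ => r ^ (ρ - 1 + ε)) =o[atTop] (fun r : ℝ => r ^ μ) :=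
      rpow_isLittleO_aux hρεμ
    exact ((h1.add h2).add h3).add h4
  have hev : ∀ᶠ r in atTop,
      Real.log (2 * C) + a * Real.log r + r ^ (μ - ε) + r ^ (ρ - 1 + ε) < δ * r ^ μ := by
    have h2 := hlo.def (half_pos hδ0)
    filter_upwards [h2, eventually_gt_atTop (0:ℝ)] with r hr hr0
    have hrμ : 0 < r ^ μ := Real.rpow_pos_of_pos hr0 μ
    rw [Real.norm_eq_abs, Real.norm_eq_abs, abs_of_pos hrμ] at hr
    calc Real.log (2 * C) + a * Real.log r + r ^ (μ - ε) + r ^ (ρ - 1 + ε)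
        ≤ δ / 2 * r ^ μ := le_trans (le_abs_self _) hr
      _ < δ * r ^ μ := by nlinarith
  obtain ⟨R, hR⟩ := eventually_atTop.1 hev
  -- E is unbounded
  have hub : ∃ r ∈ E, R ≤ r := by
    by_contra hb
    push_neg at hb
    have hsub : E ⊆ Set.Ioc 1 R := fun r hr => ⟨hE1 hr, (hb r hr).le⟩
    have hle : (∫⁻ r in E, ENNReal.ofReal (1 / r)) ≤
        ∫⁻ r in Set.Ioc (1:ℝ) R, ENNReal.ofReal (1 / r) := lintegral_mono_set hsub
    have hle2 : (∫⁻ r in Set.Ioc (1:ℝ) R, ENNReal.ofReal (1 / r)) ≤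
        ∫⁻ _ in Set.Ioc (1:ℝ) R, (1 : ENNReal) := by
      refine setLIntegral_mono' measurableSet_Ioc fun r hr => ?_
      have hr1 : (1:ℝ) < r := hr.1
      have : (1:ℝ) / r ≤ 1 := by
        rw [div_le_one (by linarith)]; linarith
      calc ENNReal.ofReal (1 / r) ≤ ENNReal.ofReal 1 := ENNReal.ofReal_le_ofReal this
        _ = 1 := ENNReal.ofReal_one
    rw [setLIntegral_one, Real.volume_Ioc] at hle2
    rw [hEm] at hle
    exact absurd (le_trans hle hle2) (by simp)
  obtain ⟨r, hrE, hrR⟩ := hub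
  have hr1 : (1:ℝ) < r := hE1 hrE
  have hr0 : (0:ℝ) < r := by linarith
  have hrμ : 0 < r ^ μ := Real.rpow_pos_of_pos hr0 μ
  have hApos : 0 ≤ r ^ (μ - ε) := (Real.rpow_pos_of_pos hr0 _).le
  have hBpos : 0 ≤ r ^ (ρ - 1 + ε) := (Real.rpow_pos_of_pos hr0 _).le
  have hTpos : 0 ≤ (τ' + ε) * r ^ μ := mul_nonneg (by linarith) hrμ.le
  have hra : 0 < r ^ a := Real.rpow_pos_of_pos hr0 a
  set S : ℝ := (τ' + ε) * r ^ μ + r ^ (μ - ε) + r ^ (ρ - 1 + ε) with hSdef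
  have key := hEb r hrE
  have key2 : Real.exp ((τ - ε) * r ^ μ) ≤ 2 * C * r ^ a * Real.exp S := by
    have ht1 : Real.exp ((τ' + ε) * r ^ μ + r ^ (ρ - 1 + ε)) ≤ Real.exp S :=
      Real.exp_le_exp.2 (by simp only [hSdef]; linarith)
    have ht2 : Real.exp (r ^ (μ - ε) + r ^ (ρ - 1 + ε)) ≤ Real.exp S :=
      Real.exp_le_exp.2 (by simp only [hSdef]; linarith)
    calc Real.exp ((τ - ε) * r ^ μ)
        ≤ C * r ^ a * Real.exp ((τ' + ε) * r ^ μ + r ^ (ρ - 1 + ε))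
          + C * r ^ a * Real.exp (r ^ (μ - ε) + r ^ (ρ - 1 + ε)) := key
      _ ≤ C * r ^ a * Real.exp S + C * r ^ a * Real.exp S := by
          apply add_le_add
          · exact mul_le_mul_of_nonneg_left ht1 (by positivity)
          · exact mul_le_mul_of_nonneg_left ht2 (by positivity)
      _ = 2 * C * r ^ a * Real.exp S := by ring
  have hYpos : 0 < 2 * C * r ^ a * Real.exp S := by positivity
  have hX : (τ - ε) * r ^ μ ≤ Real.log (2 * C * r ^ a * Real.exp S) :=
    (Real.le_log_iff_exp_le hYpos).2 key2
  have hlogeq : Real.log (2 * C * r ^ a * Real.exp S)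
      = Real.log (2 * C) + a * Real.log r + S := by
    rw [Real.log_mul (by positivity) (Real.exp_ne_zero S),
      Real.log_mul (by positivity) (ne_of_gt hra), Real.log_exp, Real.log_rpow hr0]
  rw [hlogeq] at hX
  have hfr := hR r hrR
  have hkey3 : δ * r ^ μ + (τ' + ε) * r ^ μ = (τ - ε) * r ^ μ := by
    rw [hδdef]; ring
  simp only [hSdef] at hX
  linarith
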